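/- For every n ≥ 5 with n ≡ 1 (mod 4), the decycling number of the cube of the n-cycle equals (n+1)/2: ∇(Cₙ³) = (n+1)/2. -/

import Mathlib

/-!
Any four consecutive vertices of `Cₙ³` span a `K₄`, and a forest contains at most two vertices
of a `K₄`. Averaging over the `n` windows `{x, x+1, x+2, x+3}` shows that an induced forest has at
most `n / 2` vertices, so every decycling set has at least `(n + 1) / 2` vertices (for `n ≥ 4`).
Conversely, for `n = 4k + 1` the `2k` vertices `0, 1, 4, 5, …, 4k - 4, 4k - 3` induce a path, whose
complement is a decycling set of size `2k + 1`.
-/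

open SimpleGraph

/-- `S` is a decycling set of `G` if the subgraph of `G` induced on the complement of `S`
is acyclic. -/
def SimpleGraph.IsDecyclingSet {V : Type*} (G : SimpleGraph V) (S : Set V) : Prop :=
  (G.induce Sᶜ).IsAcyclic

/-- The decycling number `∇(G)` of `G`: the minimum cardinality of a decycling set of `G`. -/
noncomputable def SimpleGraph.decyclingNumber {V : Type*} (G : SimpleGraph V) : ℕ :=
  sInf {k | ∃ S : Set V, G.IsDecyclingSet S ∧ S.ncard = k}

/-- The cube `Cₙ³` of the `n`-cycle: vertex set `ZMod n`, with `i` adjacent to `j` iff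
`i ≠ j` and `i - j ≡ ±1`, `±2`, or `±3 (mod n)`. -/
def cycleCube (n : ℕ) : SimpleGraph (ZMod n) where
  Adj i j := i ≠ j ∧ (i - j = 1 ∨ j - i = 1 ∨ i - j = 2 ∨ j - i = 2 ∨ i - j = 3 ∨ j - i = 3)
  symm := by constructor; intro i j ⟨h, hd⟩; exact ⟨h.symm, by tauto⟩
  loopless := by constructor; intro i ⟨h, _⟩; exact h rfl

open Finset

namespace SimpleGraph

variable {V : Type*} {G : SimpleGraph V}

theorem isAcyclic_hasse {α : Type*} [LinearOrder α] : (hasse α).IsAcyclic := by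
  refine isAcyclic_iff_forall_adj_isBridge.2 fun a b hab ↦ ?_
  wlog hcov : a ⋖ b generalizing a b
  · rw [Sym2.eq_swap]
    exact this b a hab.symm (hab.resolve_left hcov)
  rintro ⟨w⟩
  -- the only edge of `hasse α` leaving the down-set `Iic a` is `s(a, b)`
  have step : ∀ c d, ((hasse α).deleteEdges {s(a, b)}).Adj c d → c ≤ a → d ≤ a := by
    rintro c d ⟨hcd, hne⟩ hc
    by_contra! hd
    have hcd' : c ⋖ d := hcd.resolve_right fun h ↦ (h.lt.trans_le hc).not_gt hd
    obtain rfl : c = a := hc.eq_of_not_lt fun h ↦ hcd'.2 h hd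
    obtain rfl : d = b := by
      by_contra h
      rcases lt_or_gt_of_ne h with h | h
      · exact hcov.2 hd h
      · exact hcd'.2 hcov.lt h
    exact hne ⟨rfl, hcd.ne⟩
  have preserve : ∀ {x y}, ((hasse α).deleteEdges {s(a, b)}).Walk x y → (x ≤ a ↔ y ≤ a) := by
    intro x y p
    induction p with
    | nil => rfl
    | cons h _ ih => exact ⟨fun hx ↦ ih.1 (step _ _ h hx), fun hy ↦ step _ _ h.symm (ih.2 hy)⟩
  exact ((preserve w).1 le_rfl).not_gt hcov.lt

theorem IsAcyclic.card_filter_le_two {ι : Type*} [Fintype ι] {s : Set V} [DecidablePred (· ∈ s)]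
    (hs : (G.induce s).IsAcyclic) {f : ι → V} (hf : Pairwise fun i j ↦ G.Adj (f i) (f j)) :
    #{i | f i ∈ s} ≤ 2 := by
  classical
  by_contra! h
  obtain ⟨i, j, l, hi, hj, hl, hij, hil, hjl⟩ := two_lt_card_iff.1 h
  simp only [mem_filter, mem_univ, true_and] at hi hj hl
  refine hs.cliqueFree le_rfl {⟨f i, hi⟩, ⟨f j, hj⟩, ⟨f l, hl⟩} (is3Clique_triple_iff.2 ?_)
  simp only [comap_adj, Function.Embedding.coe_subtype]
  exact ⟨hf hij, hf hil, hf hjl⟩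

theorem decyclingNumber_eq_ncard {S : Set V} (hS : G.IsDecyclingSet S)
    (hmin : ∀ T, G.IsDecyclingSet T → S.ncard ≤ T.ncard) : G.decyclingNumber = S.ncard :=
  le_antisymm (Nat.sInf_le ⟨S, hS, rfl⟩) <| by
    obtain ⟨T, hT, hcard⟩ := Nat.sInf_mem (s := {k | ∃ T, G.IsDecyclingSet T ∧ T.ncard = k})
      ⟨_, S, hS, rfl⟩
    exact (hmin T hT).trans_eq hcard

end SimpleGraph

theorem Finset.sum_card_filter_add_mem {α ι : Type*} [AddGroup α] [Fintype α] [DecidableEq α]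
    [Fintype ι] (g : ι → α) (s : Finset α) : ∑ x : α, #{i | x + g i ∈ s} = Fintype.card ι * #s := by
  simp_rw [card_filter]
  rw [sum_comm, ← card_univ, ← smul_eq_mul, ← sum_const]
  refine sum_congr rfl fun i _ ↦ ?_
  rw [Fintype.sum_equiv (Equiv.addRight (g i)) (fun x ↦ if x + g i ∈ s then 1 else 0)
    (fun x ↦ if x ∈ s then 1 else 0) fun _ ↦ rfl,
    sum_boole, Nat.cast_id, filter_mem_eq_inter, univ_inter]

theorem ZMod.val_add_natCast_eq_or {n : ℕ} [NeZero n] (u : ZMod n) {d : ℕ} (hd : d < n) :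
    u.val + d = (u + d).val ∨ u.val + d = (u + d).val + n := by
  have hval : (d : ZMod n).val = d := ZMod.val_cast_of_lt hd
  rcases lt_or_ge (u.val + d) n with h | h
  · left
    rw [ZMod.val_add_of_lt (hval.symm ▸ h), hval]
  · right
    rw [← ZMod.val_add_val_of_le (hval.symm ▸ h), hval]

section cycleCube

variable {n : ℕ}

theorem cycleCube_adj_add_natCast (hn : 4 ≤ n) (x : ZMod n) {i j : ℕ} (hi : i < 4) (hj : j < 4)
    (hij : i ≠ j) : (cycleCube n).Adj (x + i) (x + j) := by
  have : NeZero n := ⟨by omega⟩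
  refine ⟨fun h ↦ hij ?_, ?_⟩
  · have := congrArg ZMod.val (add_left_cancel h)
    rwa [ZMod.val_cast_of_lt (by omega), ZMod.val_cast_of_lt (by omega)] at this
  · simp only [add_sub_add_left_eq_sub]
    interval_cases i <;> interval_cases j <;> first | omega | norm_num

theorem cycleCube_exists_val_add_eq_of_adj [NeZero n] (hn : 4 ≤ n) {u v : ZMod n}
    (h : (cycleCube n).Adj u v) : ∃ d, 1 ≤ d ∧ d ≤ 3 ∧
      (u.val + d = v.val ∨ u.val + d = v.val + n ∨ v.val + d = u.val ∨ v.val + d = u.val + n) := by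
  obtain ⟨d, hd1, hd3, h | h⟩ : ∃ d : ℕ, 1 ≤ d ∧ d ≤ 3 ∧ (u - v = d ∨ v - u = d) := by
    obtain ⟨-, h | h | h | h | h | h⟩ := h
    exacts [⟨1, le_rfl, by norm_num, .inl (mod_cast h)⟩,
      ⟨1, le_rfl, by norm_num, .inr (mod_cast h)⟩,
      ⟨2, by norm_num, by norm_num, .inl (mod_cast h)⟩,
      ⟨2, by norm_num, by norm_num, .inr (mod_cast h)⟩,
      ⟨3, by norm_num, le_rfl, .inl (mod_cast h)⟩,
      ⟨3, by norm_num, le_rfl, .inr (mod_cast h)⟩]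
  all_goals
    refine ⟨d, hd1, hd3, ?_⟩
    rw [sub_eq_iff_eq_add'] at h
  · have := h ▸ ZMod.val_add_natCast_eq_or v (d := d) (by omega)
    omega
  · have := h ▸ ZMod.val_add_natCast_eq_or u (d := d) (by omega)
    omega

theorem cycleCube_two_mul_ncard_le_of_isAcyclic (hn : 4 ≤ n) {s : Set (ZMod n)}
    (hs : ((cycleCube n).induce s).IsAcyclic) : 2 * s.ncard ≤ n := by
  classical
  have : NeZero n := ⟨by omega⟩
  have hwindow (x : ZMod n) : #{i : Fin 4 | x + (i : ℕ) ∈ s.toFinset} ≤ 2 := by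
    simpa using hs.card_filter_le_two (f := fun i : Fin 4 ↦ x + (i : ℕ)) fun i j hij ↦
      cycleCube_adj_add_natCast hn x i.2 j.2 (Fin.val_injective.ne hij)
  have h := (sum_le_sum fun x _ ↦ hwindow x).trans_eq'
    (sum_card_filter_add_mem (fun i : Fin 4 ↦ ((i : ℕ) : ZMod n)) s.toFinset)
  rw [sum_const, card_univ, ZMod.card, smul_eq_mul, Fintype.card_fin,
    ← Set.ncard_eq_toFinset_card'] at h
  omega

theorem cycleCube_le_ncard_of_isDecyclingSet (hn : 4 ≤ n) {S : Set (ZMod n)}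
    (hS : (cycleCube n).IsDecyclingSet S) : (n + 1) / 2 ≤ S.ncard := by
  have : NeZero n := ⟨by omega⟩
  have hforest := cycleCube_two_mul_ncard_le_of_isAcyclic hn hS
  have hcard := Set.ncard_add_ncard_compl S
  rw [Nat.card_zmod] at hcard
  omega

def pathVertices (n k : ℕ) : Set (ZMod n) := {v | v.val % 4 ≤ 1 ∧ v.val < 4 * k}

/-- The position of a vertex of `pathVertices n k` along the path `0 - 1 - 4 - 5 - 8 - 9 - ⋯`. -/
def pathIndex (v : ZMod n) : ℕ := 2 * (v.val / 4) + v.val % 4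

variable {k : ℕ}

theorem isAcyclic_induce_pathVertices [NeZero n] (hk : 4 * k < n) :
    ((cycleCube n).induce (pathVertices n k)).IsAcyclic := by
  let f : (cycleCube n).induce (pathVertices n k) →g hasse ℕ :=
    { toFun := fun v ↦ pathIndex v.1
      map_rel' := fun {u v} huv ↦ by
        simp only [comap_adj, Function.Embedding.coe_subtype] at huv
        obtain ⟨hu, hu'⟩ := u.2
        obtain ⟨hv, hv'⟩ := v.2
        obtain ⟨d, hd1, hd3, h⟩ := cycleCube_exists_val_add_eq_of_adj (by omega) huv
        simp only [hasse_adj, Nat.covBy_iff_add_one_eq, pathIndex]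
        omega }
  refine isAcyclic_hasse.comap f fun u v h ↦ Subtype.ext (ZMod.val_injective _ ?_)
  obtain ⟨hu, hu'⟩ := u.2
  obtain ⟨hv, hv'⟩ := v.2
  simp only [f, RelHom.coeFn_mk, pathIndex] at h
  omega

theorem ncard_pathVertices [NeZero n] (hk : 4 * k ≤ n) : (pathVertices n k).ncard = 2 * k := by
  refine (Set.ncard_congr (t := Set.Iio (2 * k)) (fun v _ ↦ pathIndex v) ?_ ?_ ?_).trans
    (Set.ncard_Iio_nat _)
  · rintro v ⟨hv, hv'⟩
    simp only [Set.mem_Iio, pathIndex]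
    omega
  · rintro u v ⟨hu, hu'⟩ ⟨hv, hv'⟩ h
    simp only [pathIndex] at h
    exact ZMod.val_injective _ (by omega)
  · intro i hi
    simp only [Set.mem_Iio] at hi
    have hval : ((4 * (i / 2) + i % 2 : ℕ) : ZMod n).val = 4 * (i / 2) + i % 2 :=
      ZMod.val_cast_of_lt (by omega)
    refine ⟨((4 * (i / 2) + i % 2 : ℕ) : ZMod n), ⟨?_, ?_⟩, ?_⟩ <;>
      simp only [pathIndex, hval] <;> omega

end cycleCube

/-- For every `n ≥ 5` with `n ≡ 1 (mod 4)`, `∇(Cₙ³) = (n+1)/2`. -/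
theorem decyclingNumber_cycleCube_one_mod_four (n : ℕ) (hn : 5 ≤ n) (h4 : n % 4 = 1) :
    (cycleCube n).decyclingNumber = (n + 1) / 2 := by
  have : NeZero n := ⟨by omega⟩
  have hk : 4 * (n / 4) < n := by omega
  have hcard : (pathVertices n (n / 4))ᶜ.ncard = (n + 1) / 2 := by
    have := Set.ncard_add_ncard_compl (pathVertices n (n / 4))
    rw [ncard_pathVertices hk.le, Nat.card_zmod] at this
    omega
  have hdecycling : (cycleCube n).IsDecyclingSet (pathVertices n (n / 4))ᶜ := by
    rw [IsDecyclingSet, compl_compl]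
    exact isAcyclic_induce_pathVertices hk
  rw [← hcard]
  exact decyclingNumber_eq_ncard hdecycling fun T hT ↦
    hcard ▸ cycleCube_le_ncard_of_isDecyclingSet (by omega) hT
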